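/- Let ν be a probability distribution on ℕ with no internal zeros, strongly log-concave, α ∈ (0,1), Z ∼ ν, X ∼ Bin(Z,α), Y = Z − X. Then X and Y are negatively correlated in the strong sense that for all s, t: P(X ≥ s and Y ≥ t) ≤ P(X ≥ s)·P(Y ≥ t). -/

import Mathlib

/-!
Write `ν n = u n / n!`. Strong log-concavity of `ν` is ordinary log-concavity of `u`, and
`P(X = k, Y = l) = u (k + l) · (α ^ k / k!) · ((1 - α) ^ l / l!)`. Since `u` is log-concave
without internal zeros, `u m · u (m + d + e) ≤ u (m + d) · u (m + e)`, so the joint law is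
reverse rule of order two: `p k l · p k' l' ≤ p k l' · p k' l` for `k ≤ k'`, `l ≤ l'`.
Pairing a point of the quadrant `{X ≥ s, Y ≥ t}` with one of `{X < s, Y < t}` by exchanging their
second coordinates then gives `P(X ≥ s, Y ≥ t) · P(X < s, Y < t) ≤ P(X ≥ s, Y < t) · P(X < s, Y ≥ t)`,
which is the claimed inequality once the four quadrant masses are added up to `1`.
-/

open Finset Nat

def NoInternalZeros (u : ℕ → ℝ) : Prop :=
  ∀ a b c : ℕ, a ≤ b → b ≤ c → 0 < u a → 0 < u c → 0 < u b

namespace NoInternalZeros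

variable {u : ℕ → ℝ}

lemma mul_of_pos (hu : NoInternalZeros u) {w : ℕ → ℝ} (hw : ∀ n, 0 < w n) :
    NoInternalZeros fun n => u n * w n :=
  fun a b c hab hbc ha hc =>
    mul_pos (hu a b c hab hbc (pos_of_mul_pos_left ha (hw a).le)
      (pos_of_mul_pos_left hc (hw c).le)) (hw b)

lemma mul_le_of_forall_pos (hu : NoInternalZeros u) (h0 : ∀ n, 0 ≤ u n) {a c : ℕ} {r : ℝ}
    (hr : 0 ≤ r) (h : (∀ b, a ≤ b → b ≤ c → 0 < u b) → u a * u c ≤ r) : u a * u c ≤ r := by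
  rcases (h0 a).eq_or_lt with ha | ha
  · rwa [← ha, zero_mul]
  rcases (h0 c).eq_or_lt with hc | hc
  · rwa [← hc, mul_zero]
  exact h fun b hab hbc => hu a b c hab hbc ha hc

end NoInternalZeros

/-- Chaining of ratios: `a / c ≤ x / y ≤ d / b`. -/
lemma mul_le_mul_of_cross_mul_le {a b c d x y : ℝ} (hx : 0 < x) (hy : 0 < y) (hb : 0 ≤ b)
    (hc : 0 ≤ c) (h₁ : a * y ≤ c * x) (h₂ : x * b ≤ d * y) : a * b ≤ c * d := by
  refine le_of_mul_le_mul_right ?_ (mul_pos hx hy)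
  calc a * b * (x * y) = a * y * (x * b) := by ring
    _ ≤ c * x * (d * y) := mul_le_mul h₁ h₂ (mul_nonneg hx.le hb) (mul_nonneg hc hx.le)
    _ = c * d * (x * y) := by ring

section LogConcave

variable {u : ℕ → ℝ}

lemma mul_le_mul_succ_of_logConcave (h0 : ∀ n, 0 ≤ u n) (hniz : NoInternalZeros u)
    (hlc : ∀ n, u n * u (n + 2) ≤ u (n + 1) ^ 2) (m e : ℕ) :
    u m * u (m + e + 1) ≤ u (m + 1) * u (m + e) := by
  induction e with
  | zero => rw [add_zero, mul_comm]
  | succ e ih =>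
    rw [← add_assoc]
    refine hniz.mul_le_of_forall_pos h0 (mul_nonneg (h0 _) (h0 _)) fun hpos => ?_
    refine mul_le_mul_of_cross_mul_le (hpos (m + e) (by omega) (by omega))
      (hpos (m + e + 1) (by omega) (by omega)) (h0 _) (h0 _) ih ?_
    simpa only [sq] using hlc (m + e)

lemma mul_le_mul_of_logConcave (h0 : ∀ n, 0 ≤ u n) (hniz : NoInternalZeros u)
    (hlc : ∀ n, u n * u (n + 2) ≤ u (n + 1) ^ 2) (m d e : ℕ) :
    u m * u (m + d + e) ≤ u (m + d) * u (m + e) := by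
  induction d with
  | zero => rw [add_zero]
  | succ d ih =>
    rw [← add_assoc, add_right_comm _ 1, mul_comm (u (m + d + 1))]
    refine hniz.mul_le_of_forall_pos h0 (mul_nonneg (h0 _) (h0 _)) fun hpos => ?_
    refine mul_le_mul_of_cross_mul_le (hpos (m + d) (by omega) (by omega))
      (hpos (m + d + e) (by omega) (by omega)) (h0 _) (h0 _) ?_
      (mul_le_mul_succ_of_logConcave h0 hniz hlc (m + d) e)
    rwa [mul_comm (u (m + e))]

end LogConcave

lemma logConcave_mul_factorial {ν : ℕ → ℝ}
    (hslc : ∀ i : ℕ, 1 ≤ i → (i : ℝ) * ν i ^ 2 ≥ ((i : ℝ) + 1) * ν (i - 1) * ν (i + 1)) (n : ℕ) :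
    ν n * n ! * (ν (n + 2) * (n + 2)!) ≤ (ν (n + 1) * (n + 1)!) ^ 2 := by
  have h := hslc (n + 1) (by omega)
  rw [add_tsub_cancel_right] at h
  push_cast at h
  rw [factorial_succ (n + 1), factorial_succ n]
  push_cast
  have hfac : (0 : ℝ) ≤ ((n : ℝ) + 1) * (n ! : ℝ) ^ 2 := by positivity
  nlinarith [mul_le_mul_of_nonneg_left h hfac]

def ReverseRuleOfOrderTwo {α β : Type*} [Preorder α] [Preorder β] (p : α → β → ℝ) : Prop :=
  ∀ ⦃k k' : α⦄ ⦃l l' : β⦄, k ≤ k' → l ≤ l' → p k l * p k' l' ≤ p k l' * p k' l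

lemma reverseRuleOfOrderTwo_of_add {f g h : ℕ → ℝ}
    (hf : ∀ m d e, f m * f (m + d + e) ≤ f (m + d) * f (m + e))
    (hg : ∀ k, 0 ≤ g k) (hh : ∀ l, 0 ≤ h l) :
    ReverseRuleOfOrderTwo fun k l => f (k + l) * g k * h l := by
  intro k k' l l' hk hl
  obtain ⟨d, rfl⟩ := exists_add_of_le hk
  obtain ⟨e, rfl⟩ := exists_add_of_le hl
  have hgh : 0 ≤ g k * g (k + d) * h l * h (l + e) :=
    mul_nonneg (mul_nonneg (mul_nonneg (hg _) (hg _)) (hh _)) (hh _)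
  calc f (k + l) * g k * h l * (f (k + d + (l + e)) * g (k + d) * h (l + e))
      = f (k + l) * f (k + l + d + e) * (g k * g (k + d) * h l * h (l + e)) := by ring_nf
    _ ≤ f (k + l + d) * f (k + l + e) * (g k * g (k + d) * h l * h (l + e)) :=
      mul_le_mul_of_nonneg_right (hf _ _ _) hgh
    _ = _ := by ring_nf

lemma tsum_indicator_eq_inter_add_inter_compl {ι : Type*} {f : ι → ℝ} (hf : Summable f)
    (S T : Set ι) :
    ∑' i, S.indicator f i = ∑' i, (S ∩ T).indicator f i + ∑' i, (S ∩ Tᶜ).indicator f i := by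
  rw [← (hf.indicator _).tsum_add (hf.indicator _)]
  refine tsum_congr fun i => ?_
  have := congrFun (Set.indicator_union_of_disjoint (s := S ∩ T) (t := S ∩ Tᶜ)
    (Disjoint.mono Set.inter_subset_right Set.inter_subset_right disjoint_compl_right) f) i
  rwa [Set.inter_union_compl] at this

namespace ReverseRuleOfOrderTwo

variable {α β : Type*} [LinearOrder α] [LinearOrder β] {p : α → β → ℝ}

lemma indicator_mul_indicator_le (hrr : ReverseRuleOfOrderTwo p) (hp0 : ∀ k l, 0 ≤ p k l)
    (s : α) (t : β) (x y : α × β) :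
    ({q | s ≤ q.1} ∩ {q | t ≤ q.2}).indicator (Function.uncurry p) x *
        ({q | q.1 < s} ∩ {q | q.2 < t}).indicator (Function.uncurry p) y ≤
      ({q | s ≤ q.1} ∩ {q | q.2 < t}).indicator (Function.uncurry p) (x.1, y.2) *
        ({q | q.1 < s} ∩ {q | t ≤ q.2}).indicator (Function.uncurry p) (y.1, x.2) := by
  have hF : ∀ S : Set (α × β), 0 ≤ S.indicator (Function.uncurry p) :=
    fun S => Set.indicator_nonneg fun q _ => hp0 q.1 q.2
  by_cases hxy : (s ≤ x.1 ∧ t ≤ x.2) ∧ y.1 < s ∧ y.2 < t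
  · obtain ⟨⟨hx₁, hx₂⟩, hy₁, hy₂⟩ := hxy
    have := hrr (hy₁.trans_le hx₁).le (hy₂.trans_le hx₂).le
    simp only [Set.indicator_apply, Set.mem_inter_iff, Set.mem_ofPred_eq, hx₁, hx₂, hy₁, hy₂,
      and_self, if_true, Function.uncurry_def]
    linarith [mul_comm (p x.1 x.2) (p y.1 y.2), mul_comm (p x.1 y.2) (p y.1 x.2)]
  · refine le_trans (le_of_eq ?_) (mul_nonneg (hF _ _) (hF _ _))
    simp only [Set.indicator_apply, Set.mem_inter_iff, Set.mem_ofPred_eq]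
    split_ifs <;> simp_all

lemma tsum_inter_mul_tsum_inter_le (hrr : ReverseRuleOfOrderTwo p) (hp0 : ∀ k l, 0 ≤ p k l)
    (hp : Summable (Function.uncurry p)) (s : α) (t : β) :
    (∑' q, ({q | s ≤ q.1} ∩ {q | t ≤ q.2}).indicator (Function.uncurry p) q) *
        ∑' q, ({q | q.1 < s} ∩ {q | q.2 < t}).indicator (Function.uncurry p) q ≤
      (∑' q, ({q | s ≤ q.1} ∩ {q | q.2 < t}).indicator (Function.uncurry p) q) *
        ∑' q, ({q | q.1 < s} ∩ {q | t ≤ q.2}).indicator (Function.uncurry p) q := by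
  have hF : ∀ S : Set (α × β), 0 ≤ S.indicator (Function.uncurry p) :=
    fun S => Set.indicator_nonneg fun q _ => hp0 q.1 q.2
  have hprod : ∀ S T : Set (α × β), Summable fun z : (α × β) × (α × β) =>
      S.indicator (Function.uncurry p) z.1 * T.indicator (Function.uncurry p) z.2 :=
    fun S T => (hp.indicator S).mul_of_nonneg (hp.indicator T) (hF S) (hF T)
  let e : (α × β) × (α × β) ≃ (α × β) × (α × β) :=
    Function.Involutive.toPerm (fun z => ((z.1.1, z.2.2), (z.2.1, z.1.2))) fun _ => rfl
  rw [(hp.indicator _).tsum_mul_tsum (hp.indicator _) (hprod _ _),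
    (hp.indicator _).tsum_mul_tsum (hp.indicator _) (hprod _ _),
    ← e.tsum_eq fun z => _ * ({q | q.1 < s} ∩ {q | t ≤ q.2}).indicator (Function.uncurry p) z.2]
  exact (hprod _ _).tsum_le_tsum (fun z => indicator_mul_indicator_le hrr hp0 s t z.1 z.2)
    (e.summable_iff.mpr (hprod _ _))

theorem tsum_mul_tsum_inter_le (hrr : ReverseRuleOfOrderTwo p) (hp0 : ∀ k l, 0 ≤ p k l)
    (hp : Summable (Function.uncurry p)) (s : α) (t : β) :
    (∑' q : α × β, p q.1 q.2) * (∑' q : α × β, if s ≤ q.1 ∧ t ≤ q.2 then p q.1 q.2 else 0) ≤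
      (∑' q : α × β, if s ≤ q.1 then p q.1 q.2 else 0) *
        (∑' q : α × β, if t ≤ q.2 then p q.1 q.2 else 0) := by
  have key := tsum_inter_mul_tsum_inter_le hrr hp0 hp s t
  have hU : {q : α × β | q.1 < s} = {q | s ≤ q.1}ᶜ := by ext; simp
  have hV : {q : α × β | q.2 < t} = {q | t ≤ q.2}ᶜ := by ext; simp
  rw [hU, hV] at key
  have hsplit := tsum_indicator_eq_inter_add_inter_compl hp
  have h₁ := hsplit Set.univ {q | s ≤ q.1}
  have h₂ := hsplit {q | s ≤ q.1} {q | t ≤ q.2}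
  have h₃ := hsplit {q | s ≤ q.1}ᶜ {q | t ≤ q.2}
  have h₄ := hsplit {q | t ≤ q.2} {q | s ≤ q.1}
  rw [Set.univ_inter, Set.univ_inter, Set.indicator_univ] at h₁
  rw [Set.inter_comm {q : α × β | t ≤ q.2}, Set.inter_comm {q : α × β | t ≤ q.2}] at h₄
  have hX : (∑' q : α × β, if s ≤ q.1 then p q.1 q.2 else 0) =
      ∑' q, {q | s ≤ q.1}.indicator (Function.uncurry p) q :=
    tsum_congr fun q => by simp [Set.indicator_apply, Function.uncurry_def]
  have hY : (∑' q : α × β, if t ≤ q.2 then p q.1 q.2 else 0) =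
      ∑' q, {q | t ≤ q.2}.indicator (Function.uncurry p) q :=
    tsum_congr fun q => by simp [Set.indicator_apply, Function.uncurry_def]
  have hXY : (∑' q : α × β, if s ≤ q.1 ∧ t ≤ q.2 then p q.1 q.2 else 0) =
      ∑' q, ({q | s ≤ q.1} ∩ {q | t ≤ q.2}).indicator (Function.uncurry p) q :=
    tsum_congr fun q => by simp [Set.indicator_apply, Function.uncurry_def]
  rw [hX, hY, hXY, show (∑' q : α × β, p q.1 q.2) = ∑' q, Function.uncurry p q from rfl, h₁, h₂,
    h₃, h₄]
  nlinarith [key]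

end ReverseRuleOfOrderTwo

lemma hasSum_of_sum_antidiagonal {A : Type*} [AddMonoid A] [HasAntidiagonal A]
    {g : A × A → ℝ} (hg : ∀ q, 0 ≤ g q) {f : A → ℝ} {a : ℝ} (hf : HasSum f a)
    (hgf : ∀ n, ∑ q ∈ antidiagonal n, g q = f n) : HasSum g a := by
  let e := HasAntidiagonal.sigmaAntidiagonalEquivProd (A := A)
  have hfib : ∀ n, ∑' q : antidiagonal n, g (e ⟨n, q⟩) = f n :=
    fun n => (Finset.tsum_subtype _ g).trans (hgf n)
  have hsig : Summable (g ∘ e) :=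
    (summable_sigma_of_nonneg fun _ => hg _).mpr
      ⟨fun _ => .of_finite, by simpa only [Function.comp_apply, hfib] using hf.summable⟩
  rw [← e.hasSum_iff, ← hf.tsum_eq, ← tsum_congr hfib]
  exact hsig.tsum_sigma' (fun _ => .of_finite) ▸ hsig.hasSum

lemma sum_antidiagonal_binomial (ν : ℕ → ℝ) (α : ℝ) (n : ℕ) :
    ∑ q ∈ antidiagonal n, ν (q.1 + q.2) * ((q.1 + q.2).choose q.1 : ℝ) * α ^ q.1 * (1 - α) ^ q.2
      = ν n := by
  calc _ = ν n * ∑ q ∈ antidiagonal n, n.choose q.1 • (α ^ q.1 * (1 - α) ^ q.2) := by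
        rw [Finset.mul_sum]
        refine Finset.sum_congr rfl fun q hq => ?_
        rw [mem_antidiagonal.mp hq, nsmul_eq_mul]
        ring
    _ = ν n := by rw [← (Commute.all α (1 - α)).add_pow', add_sub_cancel, one_pow, mul_one]

/-- If `ν` is a strongly log-concave probability distribution on `ℕ` with no
internal zeros, `α ∈ (0,1)`, `Z ∼ ν`, `X ∼ Bin(Z,α)`, `Y = Z - X` (joint law
`p k l = ν(k+l)·C(k+l,k)·α^k·(1-α)^l`), then `X` and `Y` are negatively
correlated: `P(X ≥ s, Y ≥ t) ≤ P(X ≥ s)·P(Y ≥ t)` for all `s, t`. -/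
theorem slc_implies_neg_correlation (ν : ℕ → ℝ) (hν0 : ∀ i, 0 ≤ ν i)
    (hν1 : ∑' i, ν i = 1)
    (hniz : ∀ a b c : ℕ, a ≤ b → b ≤ c → 0 < ν a → 0 < ν c → 0 < ν b)
    (hslc : ∀ i : ℕ, 1 ≤ i → (i : ℝ) * ν i ^ 2 ≥ ((i : ℝ) + 1) * ν (i - 1) * ν (i + 1))
    (α : ℝ) (hα0 : 0 < α) (hα1 : α < 1)
    (p : ℕ → ℕ → ℝ)
    (hp : ∀ k l, p k l = ν (k + l) * ((k + l).choose k : ℝ) * α ^ k * (1 - α) ^ l)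
    (s t : ℕ) :
    (∑' q : ℕ × ℕ, if s ≤ q.1 ∧ t ≤ q.2 then p q.1 q.2 else 0) ≤
      (∑' q : ℕ × ℕ, if s ≤ q.1 then p q.1 q.2 else 0) *
        (∑' q : ℕ × ℕ, if t ≤ q.2 then p q.1 q.2 else 0) := by
  have hβ : 0 ≤ 1 - α := by linarith
  have hp0 : ∀ k l, 0 ≤ p k l := fun k l => by
    rw [hp]; have := hν0 (k + l); positivity
  have hνs : Summable ν := by
    by_contra h
    exact one_ne_zero (hν1.symm.trans (tsum_eq_zero_of_not_summable h))
  have hfactor : p = fun k l => ν (k + l) * (k + l)! * (α ^ k / k !) * ((1 - α) ^ l / l !) := by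
    ext k l
    rw [hp, cast_add_choose]
    field_simp
  have hrr : ReverseRuleOfOrderTwo p := hfactor ▸ reverseRuleOfOrderTwo_of_add
    (mul_le_mul_of_logConcave (fun n => mul_nonneg (hν0 n) (by positivity))
      (NoInternalZeros.mul_of_pos hniz fun n => by positivity) (logConcave_mul_factorial hslc))
    (fun k => by positivity) (fun l => by positivity)
  have hmass : HasSum (Function.uncurry p) 1 :=
    hasSum_of_sum_antidiagonal (fun q => hp0 q.1 q.2) (hν1 ▸ hνs.hasSum) fun n => by
      simp only [hp, sum_antidiagonal_binomial]
  have htotal : ∑' q : ℕ × ℕ, p q.1 q.2 = 1 := hmass.tsum_eq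
  simpa only [htotal, one_mul] using hrr.tsum_mul_tsum_inter_le hp0 hmass.summable s t
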